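/- arXiv:1908.04056 — 2 statements merged into one kernel-verified Lean document; each statement's English description precedes it below -/
import Mathlib

section
/- If x is a nonempty word over A and (n_1, n_2, …, n_k) is a Nyldon factorization of x (that is, x = n_1 n_2 ⋯ n_k, each n_i is Nyldon, and n_1 ≤_lex n_2 ≤_lex ⋯ ≤_lex n_k), then n_k is the longest Nyldon suffix of x: n_k is a Nyldon suffix of x, and every suffix s of x that is Nyldon satisfies |s| ≤ |n_k|. -/
/-!
Common definitions: words over a totally ordered alphabet, lexicographic order,
Nyldon and Lyndon words, Nyldon-like sets, right Hall sets, and (circular) codes.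
-/

/-- Strict lexicographic order on words: `u <_lex v` iff `u` is a proper prefix of `v`,
or `u` and `v` first differ at a position where `u` has the smaller letter. -/
def LexLt {A : Type*} [LinearOrder A] (u v : List A) : Prop :=
  List.Lex (· < ·) u v

/-- Nonstrict lexicographic order on words. -/
def LexLe {A : Type*} [LinearOrder A] (u v : List A) : Prop :=
  u = v ∨ LexLt u v

theorem length_le_length_flatten_of_ne_nil {A : Type*} {s : List (List A)}
    (h : ∀ g ∈ s, g ≠ []) : s.length ≤ s.flatten.length := by
  induction s with
  | nil => simp
  | cons a t ih =>
    simp only [List.flatten_cons, List.length_append, List.length_cons]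
    have ha : 1 ≤ a.length := List.length_pos_iff.mpr (h a (by simp))
    have ht := ih (fun g hg => h g (List.mem_cons_of_mem _ hg))
    omega

theorem length_lt_length_flatten {A : Type*} {f : List A} {fs : List (List A)}
    (h2 : 2 ≤ fs.length) (hne : ∀ g ∈ fs, g ≠ []) (hf : f ∈ fs) :
    f.length < fs.flatten.length := by
  obtain ⟨s, t, rfl⟩ := List.append_of_mem hf
  have hs : s.length ≤ s.flatten.length :=
    length_le_length_flatten_of_ne_nil (fun g hg => hne g (by simp [hg]))
  have ht : t.length ≤ t.flatten.length :=
    length_le_length_flatten_of_ne_nil (fun g hg => hne g (by simp [hg]))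
  have hlen : 2 ≤ s.length + t.length + 1 := by
    simp only [List.length_append, List.length_cons] at h2
    omega
  have hj : (s ++ f :: t).flatten.length
      = s.flatten.length + f.length + t.flatten.length := by
    simp [List.flatten_append]
    omega
  omega

/-- A nonempty word is Nyldon if it admits no factorization into at least two
lexicographically nondecreasing Nyldon words. (Single letters are Nyldon vacuously,
since they admit no factorization into at least two nonempty words at all.) -/
def IsNyldon {A : Type*} [LinearOrder A] (w : List A) : Prop :=
  w ≠ [] ∧ ∀ fs : List (List A), 2 ≤ fs.length → (∀ g ∈ fs, g ≠ []) →
    fs.flatten = w → (∀ f ∈ fs, IsNyldon f) → fs.Chain' LexLe → False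
termination_by w.length
decreasing_by
  rename_i h2 hne hjoin hf
  subst hjoin
  exact length_lt_length_flatten h2 hne hf

/-- A nonempty word is Lyndon if it admits no factorization into at least two
lexicographically nonincreasing Lyndon words. -/
def IsLyndon {A : Type*} [LinearOrder A] (w : List A) : Prop :=
  w ≠ [] ∧ ∀ fs : List (List A), 2 ≤ fs.length → (∀ g ∈ fs, g ≠ []) →
    fs.flatten = w → (∀ f ∈ fs, IsLyndon f) →
    fs.Chain' (fun u v => LexLe v u) → False
termination_by w.length
decreasing_by
  rename_i h2 hne hjoin hf
  subst hjoin
  exact length_lt_length_flatten h2 hne hf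

/-- `fs` is a Nyldon factorization of `w`: a nondecreasing (under `≤_lex`) sequence
of Nyldon words whose concatenation is `w`. -/
def IsNyldonFactorization {A : Type*} [LinearOrder A] (fs : List (List A)) (w : List A) :
    Prop :=
  (∀ f ∈ fs, IsNyldon f) ∧ fs.Chain' LexLe ∧ fs.flatten = w

/-- The `j`-th power `u^j` of a word `u`: the concatenation of `j` copies of `u`. -/
def wordPow {A : Type*} (u : List A) (j : ℕ) : List A :=
  (List.replicate j u).flatten

/-- A word is primitive if it is not a power `u^j` of a word `u` with `j ≥ 2`. -/
def Primitive {A : Type*} (w : List A) : Prop :=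
  ∀ (u : List A) (j : ℕ), 2 ≤ j → w ≠ wordPow u j

/-- A Nyldon-like set over the alphabet `A`: a set `Mem` of nonempty words together with a
strict total order `lt` on it, such that every single letter is in the set, a word of length
at least `2` is in the set iff it admits no factorization into at least two nondecreasing
words of the set, and `f ≺ fg` whenever `f`, `g`, `fg` are all in the set. -/
structure NyldonLike (A : Type*) where
  /-- membership in `G` -/
  Mem : List A → Prop
  /-- the strict total order `≺` on `G` -/
  lt : List A → List A → Prop
  mem_ne_nil : ∀ w, Mem w → w ≠ []
  lt_irrefl : ∀ u, Mem u → ¬ lt u u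
  lt_trans : ∀ u v x, Mem u → Mem v → Mem x → lt u v → lt v x → lt u x
  lt_total : ∀ u v, Mem u → Mem v → lt u v ∨ u = v ∨ lt v u
  singleton_mem : ∀ a : A, Mem [a]
  mem_iff : ∀ w : List A, 2 ≤ w.length →
    (Mem w ↔ ¬ ∃ fs : List (List A), 2 ≤ fs.length ∧ (∀ f ∈ fs, Mem f) ∧
      fs.Chain' (fun u v => u = v ∨ lt u v) ∧ fs.flatten = w)
  append_lt : ∀ f g, Mem f → Mem g → Mem (f ++ g) → lt f (f ++ g)

namespace NyldonLike

variable {A : Type*}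

/-- The nonstrict order `⪯` associated to a Nyldon-like set. -/
def le (G : NyldonLike A) (u v : List A) : Prop :=
  u = v ∨ G.lt u v

/-- `fs` is a `G`-factorization of `w`: a nondecreasing (under `⪯`) sequence of
`G`-words whose concatenation is `w`. -/
def IsFactorization (G : NyldonLike A) (fs : List (List A)) (w : List A) : Prop :=
  (∀ f ∈ fs, G.Mem f) ∧ fs.Chain' G.le ∧ fs.flatten = w

end NyldonLike

/-- A factorization `fs` of a word written as the concatenation of `blocks` preserves the
blocks if each factor is the concatenation of a (nonempty) consecutive run of whole blocks. -/
def PreservesBlocks {A : Type*} (blocks fs : List (List A)) : Prop :=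
  ∃ P : List (List (List A)), (∀ p ∈ P, p ≠ []) ∧ P.flatten = blocks ∧
    P.map List.flatten = fs

/-- A right Hall set over the alphabet `A`: a set `Mem` of nonempty words with a strict
total order `lt` such that every nonempty word has a unique nondecreasing factorization
into words of the set, and `fg ≻ g` whenever `f`, `g`, `fg` are all in the set. -/
structure RightHallSet (A : Type*) where
  /-- membership in `H` -/
  Mem : List A → Prop
  /-- the strict total order `≺` on `H` -/
  lt : List A → List A → Prop
  mem_ne_nil : ∀ w, Mem w → w ≠ []
  lt_irrefl : ∀ u, Mem u → ¬ lt u u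
  lt_trans : ∀ u v x, Mem u → Mem v → Mem x → lt u v → lt v x → lt u x
  lt_total : ∀ u v, Mem u → Mem v → lt u v ∨ u = v ∨ lt v u
  unique_factorization : ∀ w : List A, w ≠ [] →
    ∃! fs : List (List A), (∀ f ∈ fs, Mem f) ∧
      fs.Chain' (fun u v => u = v ∨ lt u v) ∧ fs.flatten = w
  append_gt : ∀ f g, Mem f → Mem g → Mem (f ++ g) → lt g (f ++ g)

/-- A set `F` of words is a code if any two sequences of words of `F` with equal
concatenations are equal. -/
def IsCode {A : Type*} (F : List A → Prop) : Prop :=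
  ∀ l₁ l₂ : List (List A), (∀ f ∈ l₁, F f) → (∀ f ∈ l₂, F f) →
    l₁.flatten = l₂.flatten → l₁ = l₂

/-- `w ∈ F*`: `w` is a concatenation of (zero or more) words of `F`. -/
def CodeStar {A : Type*} (F : List A → Prop) (w : List A) : Prop :=
  ∃ l : List (List A), (∀ f ∈ l, F f) ∧ l.flatten = w

/-- A set `F` of words is a circular code if it is a code and whenever
`uv ∈ F*` and `vu ∈ F*`, also `u ∈ F*` and `v ∈ F*`. -/
def IsCircularCode {A : Type*} (F : List A → Prop) : Prop :=
  IsCode F ∧ ∀ u v : List A, CodeStar F (u ++ v) → CodeStar F (v ++ u) → CodeStar F u ∧ CodeStar F v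

/-!
Two facts are proved together by induction on length.

(B) If `s` is a Nyldon suffix of a Nyldon word `w`, then `s ≤_lex w`.

(A) If (B) holds for the factors of a Nyldon factorization `x = n₁ ⋯ nₖ`, no Nyldon suffix of
`x` is longer than `nₖ`: such a suffix would read `u nᵢ₊₁ ⋯ nₖ` with `u` a nonempty suffix of
some `nᵢ`, `i < k`. Appending `nᵢ₊₁ ⋯ nₖ` to a Nyldon factorization of `u` would refactor the
suffix nontrivially unless the last factor `a` of `u` satisfies `nᵢ₊₁ < a`; but then
`nᵢ ≤ nᵢ₊₁ < a ≤ nᵢ` by (B).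

For (B), suppose `w = p s < s` and let `m` be the last Nyldon factor of `p`. The same junction
argument gives `s < m`, so `t = m s` is a longer suffix of `w` with `w < t`. Either `t` is Nyldon,
or by (A) the last factor `r` of its Nyldon factorization is a Nyldon suffix of `t` containing
`s`; `r = s` would make `m` itself the rest of that factorization and force `m ≤ s`, and otherwise
`w < s < r`. Both `t` and `r` contradict (B) for a suffix longer than `s`.
-/

theorem List.IsSuffix.exists_eq_append_flatten {α : Type*} {L : List (List α)} {s : List α}
    (h : s <:+ L.flatten) (hs : s ≠ []) :
    ∃ pre g post u, L = pre ++ g :: post ∧ u <:+ g ∧ u ≠ [] ∧ s = u ++ post.flatten := by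
  induction L with
  | nil => exact absurd (List.suffix_nil.mp h) hs
  | cons f L ih =>
    have hrec : s <:+ L.flatten → ∃ pre g post u,
        f :: L = pre ++ g :: post ∧ u <:+ g ∧ u ≠ [] ∧ s = u ++ post.flatten := fun hL => by
      obtain ⟨pre, g, post, u, rfl, hug, hu, hs⟩ := ih hL
      exact ⟨f :: pre, g, post, u, rfl, hug, hu, hs⟩
    obtain ⟨t, ht⟩ := h
    rcases List.append_eq_append_iff.mp ht with ⟨u, rfl, hsu⟩ | ⟨c, -, hL⟩
    · by_cases hu : u = []
      · exact hrec (by simp [hsu, hu])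
      · exact ⟨[], t ++ u, L, u, rfl, List.suffix_append t u, hu, hsu⟩
    · exact hrec ⟨c, hL.symm⟩

section Nyldon

variable {A : Type*} [LinearOrder A]

theorem lexLe_iff_le {u v : List A} : LexLe u v ↔ u ≤ v :=
  le_iff_eq_or_lt.symm

theorem IsNyldon.ne_nil {w : List A} (hw : IsNyldon w) : w ≠ [] := by
  rw [IsNyldon] at hw
  exact hw.1

theorem isNyldonFactorization_singleton {w : List A} (hw : IsNyldon w) :
    IsNyldonFactorization [w] w :=
  ⟨by simpa using hw, List.isChain_singleton w, by simp⟩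

namespace IsNyldonFactorization

variable {fs gs : List (List A)} {u v w : List A}

theorem not_isNyldon (h : IsNyldonFactorization fs w) (h2 : 2 ≤ fs.length) : ¬ IsNyldon w := by
  intro hw
  rw [IsNyldon] at hw
  exact hw.2 fs h2 (fun g hg => (h.1 g hg).ne_nil) h.2.2 h.1 h.2.1

theorem append (hu : IsNyldonFactorization fs u) (hv : IsNyldonFactorization gs v)
    (h : ∀ a ∈ fs.getLast?, ∀ b ∈ gs.head?, LexLe a b) :
    IsNyldonFactorization (fs ++ gs) (u ++ v) :=
  ⟨fun f hf => (List.mem_append.mp hf).elim (hu.1 f) (hv.1 f),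
    List.IsChain.append hu.2.1 hv.2.1 h, by rw [List.flatten_append, hu.2.2, hv.2.2]⟩

theorem left_of_append (h : IsNyldonFactorization (fs ++ gs) w) :
    IsNyldonFactorization fs fs.flatten :=
  ⟨fun f hf => h.1 f (List.mem_append_left gs hf), List.IsChain.left_of_append h.2.1, rfl⟩

end IsNyldonFactorization

theorem exists_isNyldonFactorization {w : List A} (hw : w ≠ []) :
    ∃ fs n, IsNyldonFactorization (fs ++ [n]) w := by
  by_contra! hno
  have hN : IsNyldon w := by
    rw [IsNyldon]
    refine ⟨hw, fun fs h2 _ hflat hfs hchain => ?_⟩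
    have hfs0 : fs ≠ [] := by rintro rfl; simp at h2
    rw [← List.dropLast_append_getLast hfs0] at hflat hfs hchain
    exact hno _ _ ⟨hfs, hchain, hflat⟩
  exact hno [] w (isNyldonFactorization_singleton hN)

theorem IsNyldon.eq_singleton_of_isNyldonFactorization {w : List A} {fs : List (List A)}
    (hw : IsNyldon w) (h : IsNyldonFactorization fs w) : fs = [w] := by
  match fs, h with
  | [], h => exact absurd h.2.2.symm hw.ne_nil
  | [f], h => simpa using h.2.2
  | _ :: _ :: _, h => exact absurd hw (h.not_isNyldon (by simp))

/-- If `a ≤ b`, the two factorizations would concatenate to a nontrivial Nyldon factorization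
of `u ++ v`. -/
theorem lt_of_isNyldon_append {us vs : List (List A)} {u v a b : List A}
    (hu : IsNyldonFactorization (us ++ [a]) u) (hv : IsNyldonFactorization (b :: vs) v)
    (huv : IsNyldon (u ++ v)) : b < a := by
  by_contra! hab
  refine (hu.append hv ?_).not_isNyldon (by simp; omega) huv
  simpa using lexLe_iff_le.mpr hab

theorem IsNyldonFactorization.length_le_of_isSuffix {fs : List (List A)} {n x s : List A}
    (hfac : IsNyldonFactorization (fs ++ [n]) x)
    (hfactors : ∀ f ∈ fs ++ [n], ∀ u, IsNyldon u → u <:+ f → u ≤ f)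
    (hsx : s <:+ x) (hs : IsNyldon s) : s.length ≤ n.length := by
  obtain ⟨hN, hchain, rfl⟩ := hfac
  obtain ⟨pre, g, post, u, hsplit, hug, hu, rfl⟩ := hsx.exists_eq_append_flatten hs.ne_nil
  rcases post with _ | ⟨b, post⟩
  · obtain ⟨-, hgn⟩ := List.append_inj' hsplit.symm rfl
    simpa [← List.singleton_inj.mp hgn] using hug.length_le
  exfalso
  have hsuf : g :: b :: post <:+ fs ++ [n] := hsplit ▸ List.suffix_append _ _
  have hg : g ∈ fs ++ [n] := hsuf.subset (by simp)
  obtain ⟨us, a, hua⟩ := exists_isNyldonFactorization hu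
  have hba : b < a :=
    lt_of_isNyldon_append hua ⟨fun f hf => hN f (hsuf.subset (by simp [hf])),
      (hchain.suffix hsuf).tail, rfl⟩ hs
  have hgb : g ≤ b := lexLe_iff_le.mp ((hchain.suffix hsuf).rel_head? rfl)
  have hag : a ≤ g := hfactors g hg a (hua.1 a (by simp))
    (List.IsSuffix.trans ⟨us.flatten, by simpa using hua.2.2⟩ hug)
  exact lt_irrefl g (hgb.trans_lt hba |>.trans_le hag)

theorem IsNyldon.le_of_isSuffix_step {w s : List A} (hw : IsNyldon w) (hs : IsNyldon s)
    (hsw : s <:+ w)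
    (hshorter : ∀ v : List A, v.length < w.length → IsNyldon v →
      ∀ u, IsNyldon u → u <:+ v → u ≤ v)
    (hlonger : ∀ t : List A, s.length < t.length → t <:+ w → IsNyldon t → t ≤ w) :
    s ≤ w := by
  by_contra! hws
  obtain ⟨p, rfl⟩ := hsw
  have hp : p ≠ [] := by rintro rfl; exact lt_irrefl s hws
  obtain ⟨ps, m, hpm⟩ := exists_isNyldonFactorization hp
  have hsm : s < m := lt_of_isNyldon_append hpm (isNyldonFactorization_singleton hs) hw
  -- `t = m ++ s` is a longer suffix of `w` that is still lexicographically above `w`;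
  -- core's `List.IsPrefix.le` concludes the core `≤` on lists, which is `¬ m ++ s < m`
  have hwt : p ++ s < m ++ s := hws.trans (hsm.trans_le (not_lt.mp (List.prefix_append m s).le))
  have htw : m ++ s <:+ p ++ s := by
    rw [← hpm.2.2]
    simp
  have hst : s.length < (m ++ s).length := by
    simpa using List.length_pos_iff.mpr (hpm.1 m (by simp)).ne_nil
  have ht : ¬ IsNyldon (m ++ s) := fun ht => (hlonger _ hst htw ht).not_gt hwt
  obtain ⟨vs, r, hvr⟩ := exists_isNyldonFactorization (by simp [hs.ne_nil] : m ++ s ≠ [])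
  have htlen : (m ++ s).length < (p ++ s).length :=
    htw.length_le.lt_of_ne fun h => ht (htw.eq_of_length h ▸ hw)
  have hvshorter : ∀ f ∈ vs ++ [r], f.length < (p ++ s).length := fun f hf =>
    ((List.sublist_flatten_of_mem hf).length_le.trans_eq (congrArg _ hvr.2.2)).trans_lt htlen
  have hrt : r <:+ m ++ s := ⟨vs.flatten, by simpa using hvr.2.2⟩
  have hsr : s <:+ r := List.suffix_of_suffix_length_le (List.suffix_append m s) hrt <|
    hvr.length_le_of_isSuffix (fun f hf => hshorter f (hvshorter f hf) (hvr.1 f hf))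
      (List.suffix_append m s) hs
  rcases eq_or_ne s r with rfl | hne
  · have hvsm : vs = [m] := (hpm.1 m (by simp)).eq_singleton_of_isNyldonFactorization
      ((by simpa using hvr.2.2 : vs.flatten = m) ▸ hvr.left_of_append)
    subst hvsm
    exact (lexLe_iff_le.mp (hvr.2.1.rel_head? rfl)).not_gt hsm
  · have hrN : IsNyldon r := hvr.1 r (by simp)
    have hsr' : s < r := (hshorter r (hvshorter r (by simp)) hrN s hs hsr).lt_of_ne hne
    have hrw : r ≤ p ++ s := hlonger r
      (hsr.length_le.lt_of_ne fun h => hne (hsr.eq_of_length h)) (hrt.trans htw) hrN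
    exact lt_irrefl _ (hws.trans hsr' |>.trans_le hrw)

theorem IsNyldon.le_of_isSuffix {w s : List A} (hw : IsNyldon w) (hs : IsNyldon s)
    (hsw : s <:+ w) : s ≤ w := by
  induction hn : w.length using Nat.strong_induction_on generalizing w s with
  | _ n ihn =>
  induction hk : w.length - s.length using Nat.strong_induction_on generalizing s with
  | _ k ihk =>
  refine hw.le_of_isSuffix_step hs hsw
    (fun v hv hvN u hu huv => ihn _ (hn ▸ hv) hvN hu huv rfl)
    (fun t hst htw htN => ihk _ ?_ htN htw rfl)
  have := htw.length_le
  omega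

end Nyldon

theorem stmt_1_general {A : Type*} [LinearOrder A]
    (x : List A) (fs : List (List A)) (hfs : fs ≠ [])
    (hfac : IsNyldonFactorization fs x) :
    fs.getLast hfs <:+ x ∧ IsNyldon (fs.getLast hfs) ∧
      ∀ s : List A, s <:+ x → IsNyldon s → s.length ≤ (fs.getLast hfs).length := by
  obtain ⟨fs, n, rfl⟩ : ∃ fs' n, fs = fs' ++ [n] :=
    ⟨fs.dropLast, fs.getLast hfs, (List.dropLast_append_getLast hfs).symm⟩
  rw [List.getLast_concat]
  refine ⟨?_, hfac.1 n (by simp), fun s hsx hs => hfac.length_le_of_isSuffix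
    (fun f hf u hu huf => (hfac.1 f hf).le_of_isSuffix hu huf) hsx hs⟩
  rw [← hfac.2.2]
  simp

/-- If `fs` is a Nyldon factorization of a nonempty word `x`, then its last
factor is a Nyldon suffix of `x`, and it is the longest one. -/
theorem stmt_1 {A : Type*} [LinearOrder A] [Fintype A] (hA : 2 ≤ Fintype.card A)
    (x : List A) (hx : x ≠ []) (fs : List (List A)) (hfs : fs ≠ [])
    (hfac : IsNyldonFactorization fs x) :
    fs.getLast hfs <:+ x ∧ IsNyldon (fs.getLast hfs) ∧
      ∀ s : List A, s <:+ x → IsNyldon s → s.length ≤ (fs.getLast hfs).length :=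
  stmt_1_general x fs hfs hfac
end

section
/- Let (G, ≺) be a Nyldon-like set over A. Then every nonempty word w over A has exactly one G-factorization: there exists a unique sequence (u_1, u_2, …, u_k) of words in G with u_1 ⪯ u_2 ⪯ ⋯ ⪯ u_k and w = u_1 u_2 ⋯ u_k. -/
/-!
The heart of the proof is that a proper suffix `g ∈ G` of a word `w ∈ G` satisfies `g ≺ w`.
Granting this for all factors of a `G`-factorization of `w`, every suffix of `w` lying in `G`
is a suffix of the last factor: otherwise it would straddle the junction after some factor `h`,
and comparing the last `G`-factor `c` of the part inside `h` with the next factor `b` gives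
`b ≺ c ≺ h ⪯ b`. Hence two `G`-factorizations of `w` have the same last factor, and uniqueness
follows by induction. The suffix property itself is proved by induction on `|w|` and then on
`|w| - |g|`: if `w ≺ g`, let `ℓ` be the last `G`-factor of the prefix `x` in `w = x g`; then
`g ≺ ℓ`, and the last factor of a `G`-factorization of `ℓ g` is a `G`-word `k` having `g` as a
suffix, which leads to `g ≺ k ≺ w ≺ g` (or `ℓ ⪯ g ≺ ℓ` when `k = g`).
-/

namespace NyldonLike

open List

variable {A : Type*} (G : NyldonLike A)

lemma not_le_of_lt {u v : List A} (hu : G.Mem u) (hv : G.Mem v) (h : G.lt v u) : ¬ G.le u v := by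
  rintro (rfl | h')
  exacts [G.lt_irrefl u hu h, G.lt_irrefl u hu (G.lt_trans u v u hu hv hu h' h)]

lemma not_lt_of_lt_of_lt {u v x : List A} (hu : G.Mem u) (hv : G.Mem v) (hx : G.Mem x)
    (huv : G.lt u v) (hvx : G.lt v x) : ¬ G.lt x u := fun hxu =>
  G.lt_irrefl u hu (G.lt_trans u x u hu hx hu (G.lt_trans u v x hu hv hx huv hvx) hxu)

lemma le_of_not_lt {u v : List A} (hu : G.Mem u) (hv : G.Mem v) (h : ¬ G.lt v u) : G.le u v :=
  (G.lt_total u v hu hv).elim Or.inr fun h' => h'.elim Or.inl fun h'' => absurd h'' h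

lemma exists_isFactorization (w : List A) : ∃ fs, G.IsFactorization fs w := by
  by_cases hw : G.Mem w
  · exact ⟨[w], by simpa using hw, isChain_singleton w, flatten_singleton⟩
  obtain hlen | hlen := Nat.lt_or_ge w.length 2
  · obtain ⟨⟩ | ⟨a, ⟨⟩ | ⟨b, t⟩⟩ := w
    · exact ⟨[], by simp, isChain_nil, rfl⟩
    · exact absurd (G.singleton_mem a) hw
    · simp at hlen
  · obtain ⟨fs, -, hfs⟩ := not_not.mp (mt (G.mem_iff w hlen).mpr hw)
    exact ⟨fs, hfs⟩

variable {G} in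
lemma IsFactorization.eq_nil_iff {fs : List (List A)} {w : List A}
    (h : G.IsFactorization fs w) : w = [] ↔ fs = [] := by
  rw [← h.2.2, flatten_eq_nil_iff, eq_nil_iff_forall_not_mem]
  exact forall_congr' fun f =>
    ⟨fun hf hmem => G.mem_ne_nil f (h.1 f hmem) (hf hmem), fun hf hmem => absurd hmem hf⟩

variable {G} in
lemma IsFactorization.append_left {fs gs : List (List A)} {w : List A}
    (h : G.IsFactorization (fs ++ gs) w) : G.IsFactorization fs fs.flatten :=
  ⟨fun f hf => h.1 f (mem_append_left gs hf), (isChain_append.mp h.2.1).1, rfl⟩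

lemma not_isChain_of_mem_flatten {fs : List (List A)} (hmem : ∀ f ∈ fs, G.Mem f)
    (hlen : 2 ≤ fs.length) (hw : G.Mem fs.flatten) : ¬ fs.IsChain G.le := fun hchain => by
  have := length_le_length_flatten_of_ne_nil fun f hf => G.mem_ne_nil f (hmem f hf)
  exact (G.mem_iff _ (by omega)).mp hw ⟨fs, hlen, hmem, hchain, rfl⟩

lemma eq_singleton_of_isFactorization_of_mem {fs : List (List A)} {w : List A}
    (hw : G.Mem w) (h : G.IsFactorization fs w) : fs = [w] := by
  obtain ⟨⟩ | ⟨f, ⟨⟩ | ⟨f', t⟩⟩ := fs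
  · exact absurd (h.eq_nil_iff.mpr rfl) (G.mem_ne_nil w hw)
  · simpa using h.2.2
  · exact absurd h.2.1 (G.not_isChain_of_mem_flatten h.1 (by simp) (h.2.2 ▸ hw))

lemma lt_of_mem_flatten_append {l₁ l₂ : List (List A)} (hmem : ∀ f ∈ l₁ ++ l₂, G.Mem f)
    (h₁ : l₁.IsChain G.le) (h₂ : l₂.IsChain G.le) (hw : G.Mem (l₁ ++ l₂).flatten)
    {a b : List A} (ha : a ∈ l₁.getLast?) (hb : b ∈ l₂.head?) : G.lt b a := by
  have ha' := mem_of_mem_getLast? ha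
  have hb' := mem_of_mem_head? hb
  by_contra hba
  have hab :=
    G.le_of_not_lt (hmem a (mem_append_left _ ha')) (hmem b (mem_append_right _ hb')) hba
  refine G.not_isChain_of_mem_flatten hmem ?_ hw (h₁.append h₂ fun x hx y hy => ?_)
  · have := length_pos_of_mem ha'
    have := length_pos_of_mem hb'
    simp only [length_append]
    omega
  · rwa [Option.mem_unique hx ha, Option.mem_unique hy hb]

def ProperSuffixesLt (w : List A) : Prop :=
  ∀ x g, x ≠ [] → G.Mem g → w = x ++ g → G.lt g w

lemma lt_of_isFactorization_of_mem_append {xs : List (List A)} {x ℓ g : List A}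
    (hxs : G.IsFactorization (xs ++ [ℓ]) x) (hg : G.Mem g) (hxg : G.Mem (x ++ g)) :
    G.lt g ℓ := by
  refine G.lt_of_mem_flatten_append (l₂ := [g]) (fun u hu => ?_) hxs.2.1 (isChain_singleton g)
    (by rwa [flatten_append, hxs.2.2, flatten_singleton]) (by simp) (by simp)
  rcases mem_append.mp hu with hu | hu
  exacts [hxs.1 u hu, mem_singleton.mp hu ▸ hg]

lemma isSuffix_of_isSuffix_flatten {fs : List (List A)} {f g : List A}
    (hmem : ∀ u ∈ fs ++ [f], G.Mem u) (hchain : (fs ++ [f]).IsChain G.le)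
    (hsuf : ∀ u ∈ fs, G.ProperSuffixesLt u) (hg : G.Mem g) (hgw : g <:+ (fs ++ [f]).flatten) :
    g <:+ f := by
  induction fs with
  | nil => simpa using hgw
  | cons h t ih =>
    rw [cons_append] at hmem hchain
    have hh := hmem h mem_cons_self
    have htail : G.IsFactorization (t ++ [f]) (t ++ [f]).flatten :=
      ⟨fun u hu => hmem u (mem_cons_of_mem h hu), (isChain_cons.mp hchain).2, rfl⟩
    obtain ⟨z, hz⟩ := hgw
    rw [cons_append, flatten_cons] at hz
    obtain ⟨s, rfl, rfl⟩ | ⟨y, -, hy⟩ := append_eq_append_iff.mp hz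
    · rcases eq_or_ne z [] with rfl | hz
      · refine absurd hchain (G.not_isChain_of_mem_flatten hmem (by simp) ?_)
        simpa using hg
      rcases eq_or_ne s [] with rfl | hs
      · have ht : t = [] := by
          simpa using congrArg length (G.eq_singleton_of_isFactorization_of_mem hg htail)
        simp [ht]
      obtain ⟨ss, hss⟩ := G.exists_isFactorization s
      obtain ⟨ss, c, rfl⟩ := (eq_nil_or_concat' ss).resolve_left (hss.eq_nil_iff.not.mp hs)
      have hc := hss.1 c (by simp)
      obtain ⟨b, hb⟩ : ∃ b, b ∈ (t ++ [f]).head? := by cases t <;> simp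
      have hbc : G.lt b c := by
        refine G.lt_of_mem_flatten_append (fun u hu => ?_) hss.2.1 htail.2.1 ?_ (by simp) hb
        · rcases mem_append.mp hu with hu | hu
          exacts [hss.1 u hu, htail.1 u hu]
        · rwa [flatten_append, hss.2.2]
      have hch : G.lt c (z ++ s) :=
        hsuf _ mem_cons_self (z ++ ss.flatten) c (by simp [hz]) hc
          (by rw [← hss.2.2, flatten_concat, append_assoc])
      have hb' := htail.1 b (mem_of_mem_head? hb)
      exact absurd ((isChain_cons.mp hchain).1 b hb)
        (G.not_le_of_lt hh hb' (G.lt_trans b c _ hb' hc hh hbc hch))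
    · exact ih htail.1 htail.2.1 (fun u hu => hsuf u (mem_cons_of_mem h hu)) ⟨y, hy.symm⟩

lemma lt_of_eq_append_of_ih {w x g : List A} (hw : G.Mem w) (hx : x ≠ []) (hg : G.Mem g)
    (hwxg : w = x ++ g)
    (ih_short : ∀ u, G.Mem u → u.length < w.length → G.ProperSuffixesLt u)
    (ih_long : ∀ y u, y ≠ [] → G.Mem u → w = y ++ u → g.length < u.length → G.lt u w) :
    G.lt g w := by
  by_contra hgw
  have hlen : g.length < w.length := by simp [hwxg, length_pos_iff.mpr hx]
  have hwg : G.lt w g :=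
    ((G.lt_total g w hg hw).resolve_left hgw).resolve_left (by rintro rfl; omega)
  obtain ⟨xs, hxs⟩ := G.exists_isFactorization x
  obtain ⟨xs, ℓ, rfl⟩ := (eq_nil_or_concat' xs).resolve_left (hxs.eq_nil_iff.not.mp hx)
  have hℓ := hxs.1 ℓ (by simp)
  have hgℓ : G.lt g ℓ := G.lt_of_isFactorization_of_mem_append hxs hg (hwxg ▸ hw)
  rcases eq_or_ne xs [] with rfl | hxs_ne
  · obtain rfl : ℓ = x := by simpa using hxs.2.2
    have hℓw : G.lt ℓ w := hwxg ▸ G.append_lt ℓ g hℓ hg (hwxg ▸ hw)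
    exact G.not_lt_of_lt_of_lt hℓ hw hg hℓw hwg hgℓ
  obtain ⟨hs, hhs⟩ := G.exists_isFactorization (ℓ ++ g)
  obtain ⟨hs, k, rfl⟩ := (eq_nil_or_concat' hs).resolve_left
    (hhs.eq_nil_iff.not.mp (by simp [G.mem_ne_nil g hg]))
  have hprefix : 0 < xs.flatten.length :=
    length_pos_iff.mpr (hxs.append_left.eq_nil_iff.not.mpr hxs_ne)
  have hw' : w = xs.flatten ++ hs.flatten ++ k := by
    rw [hwxg, ← hxs.2.2, flatten_concat, append_assoc, ← hhs.2.2, flatten_concat, append_assoc]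
  have hshort : ∀ u ∈ hs, G.ProperSuffixesLt u := by
    intro u hu
    have hle := (sublist_flatten_of_mem (mem_append_left [k] hu)).length_le
    simp only [flatten_concat, length_append] at hle
    refine ih_short u (hhs.1 u (mem_append_left _ hu)) ?_
    rw [hw']
    simp only [length_append]
    omega
  have hk := hhs.1 k (by simp)
  obtain ⟨y, rfl⟩ := G.isSuffix_of_isSuffix_flatten hhs.1 hhs.2.1 hshort hg
    (hhs.2.2 ▸ suffix_append ℓ g)
  rcases eq_or_ne y [] with rfl | hy
  · have hsℓ : hs.flatten = ℓ := by simpa using hhs.2.2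
    obtain rfl : hs = [ℓ] :=
      G.eq_singleton_of_isFactorization_of_mem hℓ (hsℓ ▸ hhs.append_left)
    exact G.not_le_of_lt hℓ hg hgℓ (isChain_pair.mp hhs.2.1)
  · have hgk : G.lt g (y ++ g) :=
      ih_short _ hk (by rw [hw']; simp only [length_append]; omega) y g hy hg rfl
    have hkw : G.lt (y ++ g) w :=
      ih_long (xs.flatten ++ hs.flatten) (y ++ g)
        (ne_nil_of_length_pos (by simp only [length_append]; omega)) hk hw'
        (by simp [length_pos_iff.mpr hy])
    exact G.not_lt_of_lt_of_lt hg hk hw hgk hkw hwg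

theorem lt_of_eq_append {w x g : List A} (hw : G.Mem w) (hx : x ≠ []) (hg : G.Mem g)
    (hwxg : w = x ++ g) : G.lt g w :=
  G.lt_of_eq_append_of_ih hw hx hg hwxg
    (fun _ hu _ _ _ hx' hg' hu' => lt_of_eq_append hu hx' hg' hu')
    (fun _ _ hy hu hwu _ => lt_of_eq_append hw hy hu hwu)
termination_by (w.length, w.length - g.length)
decreasing_by
  · exact Prod.Lex.left _ _ ‹_›
  · have := congrArg length hwu
    simp only [length_append] at this
    exact Prod.Lex.right _ (by omega)

lemma isSuffix_of_isFactorization {fs : List (List A)} {f g w : List A}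
    (h : G.IsFactorization (fs ++ [f]) w) (hg : G.Mem g) (hgw : g <:+ w) : g <:+ f :=
  G.isSuffix_of_isSuffix_flatten h.1 h.2.1
    (fun u hu _ _ hx hg' hu' => G.lt_of_eq_append (h.1 u (mem_append_left _ hu)) hx hg' hu')
    hg (h.2.2 ▸ hgw)

theorem isFactorization_unique {fs gs : List (List A)} {w : List A}
    (hfs : G.IsFactorization fs w) (hgs : G.IsFactorization gs w) : fs = gs := by
  induction fs using reverseRecOn generalizing gs w with
  | nil => exact (hgs.eq_nil_iff.mp (hfs.eq_nil_iff.mpr rfl)).symm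
  | append_singleton fs f ih =>
    obtain ⟨gs, g, rfl⟩ := (eq_nil_or_concat' gs).resolve_left
      (hgs.eq_nil_iff.not.mp (hfs.eq_nil_iff.not.mpr (by simp)))
    have hfg : f <:+ g :=
      G.isSuffix_of_isFactorization hgs (hfs.1 f (by simp)) (hfs.2.2 ▸ by simp)
    have hgf : g <:+ f :=
      G.isSuffix_of_isFactorization hfs (hgs.1 g (by simp)) (hgs.2.2 ▸ by simp)
    obtain rfl := hfg.eq_of_length (hfg.length_le.antisymm hgf.length_le)
    have hflat : gs.flatten = fs.flatten := by
      simpa using hgs.2.2.trans hfs.2.2.symm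
    rw [ih hfs.append_left (hflat ▸ hgs.append_left)]

end NyldonLike

theorem stmt_7_general {A : Type*} (G : NyldonLike A) (w : List A) :
    ∃! fs : List (List A), G.IsFactorization fs w :=
  let ⟨fs, hfs⟩ := G.exists_isFactorization w
  ⟨fs, hfs, fun _ hgs => G.isFactorization_unique hgs hfs⟩

/-- For any Nyldon-like set `(G, ≺)`, every nonempty word has exactly one
`G`-factorization. -/
theorem stmt_7 {A : Type*} [LinearOrder A] [Fintype A] (hA : 2 ≤ Fintype.card A)
    (G : NyldonLike A) (w : List A) (hw : w ≠ []) :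
    ∃! fs : List (List A), G.IsFactorization fs w :=
  stmt_7_general G w
end
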